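/- arXiv:2605.10189 — 2 statements merged into one kernel-verified Lean document; each statement's English description precedes it below -/
import Mathlib

section
/- Let V be a nonempty finite set, p_1,...,p_M strictly positive probability distributions on V, and w_1,...,w_M strictly positive weights summing to 1. Then ∑_{v ∈ V} ∏_i p_i(v)^{w_i} = 1 if and only if p_1 = p_2 = ... = p_M. -/
/-!
Pointwise, the weighted geometric mean `∏ i, p i v ^ w i` is at most the weighted arithmetic mean
`∑ i, w i * p i v` (AM–GM), and the arithmetic means sum to `1` over `V`. Hence the normalizer is
`1` exactly when AM–GM is an equality at every `v`, that is, when all `p i v` agree for each `v`.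
-/

open Finset

theorem sum_weighted_arith_mean_eq_one {ι V : Type*} [Fintype V] (s : Finset ι)
    (p : ι → V → ℝ) (w : ι → ℝ) (hp_sum : ∀ i ∈ s, ∑ v, p i v = 1)
    (hw_sum : ∑ i ∈ s, w i = 1) :
    ∑ v, ∑ i ∈ s, w i * p i v = 1 := by
  rw [sum_comm]
  simp_rw [← mul_sum]
  rw [sum_congr rfl fun i hi ↦ by rw [hp_sum i hi, mul_one], hw_sum]

theorem poe_normalizer_eq_one_iff_general
    {V : Type*} [Fintype V] {M : ℕ}
    (p : Fin M → V → ℝ) (w : Fin M → ℝ)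
    (hp_pos : ∀ i v, 0 < p i v)
    (hp_sum : ∀ i, ∑ v, p i v = 1)
    (hw_pos : ∀ i, 0 < w i)
    (hw_sum : ∑ i, w i = 1) :
    (∑ v, ∏ i, (p i v) ^ (w i)) = 1 ↔ ∀ i j, p i = p j := by
  have amgm_le v := Real.geom_mean_le_arith_mean_weighted univ w (p · v)
    (fun i _ ↦ (hw_pos i).le) hw_sum (fun i _ ↦ (hp_pos i v).le)
  have amgm_eq_iff v := Real.geom_mean_eq_arith_mean_weighted_iff_of_pos univ w (p · v)
    (fun i _ ↦ hw_pos i) hw_sum (fun i _ ↦ (hp_pos i v).le)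
  calc (∑ v, ∏ i, (p i v) ^ (w i)) = 1
      ↔ ∑ v, ∏ i, (p i v) ^ (w i) = ∑ v, ∑ i, w i * p i v := by
        rw [sum_weighted_arith_mean_eq_one univ p w (fun i _ ↦ hp_sum i) hw_sum]
    _ ↔ ∀ v, ∏ i, (p i v) ^ (w i) = ∑ i, w i * p i v := by
        simpa using sum_eq_sum_iff_of_le (s := univ) fun v _ ↦ amgm_le v
    _ ↔ ∀ v i j, p i v = p j v := by simp [amgm_eq_iff]
    _ ↔ ∀ i j, p i = p j := by
        simp only [funext_iff]
        exact ⟨fun h i j v ↦ h v i j, fun h v i j ↦ h i j v⟩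

theorem poe_normalizer_eq_one_iff
    {V : Type*} [Fintype V] [Nonempty V] {M : ℕ}
    (p : Fin M → V → ℝ) (w : Fin M → ℝ)
    (hp_pos : ∀ i v, 0 < p i v)
    (hp_sum : ∀ i, ∑ v, p i v = 1)
    (hw_pos : ∀ i, 0 < w i)
    (hw_sum : ∑ i, w i = 1) :
    (∑ v, ∏ i, (p i v) ^ (w i)) = 1 ↔ ∀ i j, p i = p j :=
  poe_normalizer_eq_one_iff_general p w hp_pos hp_sum hw_pos hw_sum
end

section
/- Let V be a nonempty finite set, p_1,...,p_M strictly positive probability distributions on V, and w_1,...,w_M nonnegative weights summing to 1. Then the minimum value of ∑_i w_i · KL(q ‖ p_i) over probability distributions q equals −log Z, where Z = ∑_{v ∈ V} ∏_i p_i(v)^{w_i}. In particular, the minimum value is nonnegative. -/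
/-!
Write `g = ∏ᵢ pᵢ ^ wᵢ`, `Z = ∑ g` (`poeNormalizer`) and `r = g / Z` (`poe`, the normalised
product of experts). Since `∑ wᵢ = 1` and `log g = ∑ wᵢ log pᵢ`, for every probability vector `q`
`∑ wᵢ KL(q ‖ pᵢ) = KL(q ‖ r) - log Z`.
By Gibbs' inequality the right-hand side is minimised at `q = r`, with value `-log Z`,
and this value is `∑ wᵢ KL(r ‖ pᵢ) ≥ 0`.
-/

noncomputable def KL {V : Type*} [Fintype V] (q p : V → ℝ) : ℝ :=
  ∑ v, if q v = 0 then 0 else q v * Real.log (q v / p v)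

open Finset Real

section KL

variable {V : Type*} [Fintype V]

theorem KL_eq_sum_mul_log_sub_sum_mul_log (q : V → ℝ) {p : V → ℝ} (hp : ∀ v, p v ≠ 0) :
    KL q p = ∑ v, q v * log (q v) - ∑ v, q v * log (p v) := by
  rw [KL, ← sum_sub_distrib]
  refine sum_congr rfl fun v _ => ?_
  by_cases hv : q v = 0
  · simp [hv]
  · rw [if_neg hv, log_div hv (hp v), mul_sub]

@[simp]
theorem KL_self (q : V → ℝ) : KL q q = 0 :=
  sum_eq_zero fun v _ => by by_cases hv : q v = 0 <;> simp [hv]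

theorem sub_le_mul_log_div {x y : ℝ} (hx : 0 < x) (hy : 0 < y) : x - y ≤ x * log (x / y) := by
  have h := one_sub_inv_le_log_of_pos (div_pos hx hy)
  rw [inv_div] at h
  calc x - y = x * (1 - y / x) := by field_simp
    _ ≤ x * log (x / y) := mul_le_mul_of_nonneg_left h hx.le

theorem KL_nonneg {q p : V → ℝ} (hq : ∀ v, 0 ≤ q v) (hp : ∀ v, 0 < p v)
    (hmass : ∑ v, p v ≤ ∑ v, q v) : 0 ≤ KL q p := by
  have pointwise : ∀ v, q v - p v ≤ if q v = 0 then 0 else q v * log (q v / p v) := by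
    intro v
    split_ifs with hv
    · linarith [hp v]
    · exact sub_le_mul_log_div ((hq v).lt_of_ne' hv) (hp v)
  calc (0 : ℝ) ≤ ∑ v, q v - ∑ v, p v := sub_nonneg.mpr hmass
    _ = ∑ v, (q v - p v) := (sum_sub_distrib _ _).symm
    _ ≤ KL q p := sum_le_sum fun v _ => pointwise v

end KL

section ProductOfExperts

variable {V ι : Type*} [Fintype ι]

theorem log_prod_rpow {p : ι → ℝ} (hp : ∀ i, 0 < p i) (w : ι → ℝ) :
    log (∏ i, p i ^ w i) = ∑ i, w i * log (p i) := by
  rw [log_prod fun i _ => (rpow_pos_of_pos (hp i) _).ne']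
  exact sum_congr rfl fun i _ => log_rpow (hp i) _

theorem prod_rpow_pos {p : ι → V → ℝ} (w : ι → ℝ) (hp : ∀ i v, 0 < p i v) (v : V) :
    0 < ∏ i, p i v ^ w i :=
  prod_pos fun i _ => rpow_pos_of_pos (hp i v) _

variable [Fintype V]

noncomputable def poeNormalizer (p : ι → V → ℝ) (w : ι → ℝ) : ℝ :=
  ∑ v, ∏ i, p i v ^ w i

noncomputable def poe (p : ι → V → ℝ) (w : ι → ℝ) (v : V) : ℝ :=
  (∏ i, p i v ^ w i) / poeNormalizer p w

variable {p : ι → V → ℝ} (w : ι → ℝ)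

theorem poeNormalizer_pos [Nonempty V] (hp : ∀ i v, 0 < p i v) : 0 < poeNormalizer p w :=
  sum_pos (fun v _ => prod_rpow_pos w hp v) univ_nonempty

theorem poe_pos [Nonempty V] (hp : ∀ i v, 0 < p i v) (v : V) : 0 < poe p w v :=
  div_pos (prod_rpow_pos w hp v) (poeNormalizer_pos w hp)

theorem sum_poe [Nonempty V] (hp : ∀ i v, 0 < p i v) : ∑ v, poe p w v = 1 := by
  simp only [poe, ← sum_div]
  exact div_self (poeNormalizer_pos w hp).ne'

theorem log_poe [Nonempty V] (hp : ∀ i v, 0 < p i v) (v : V) :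
    log (poe p w v) = ∑ i, w i * log (p i v) - log (poeNormalizer p w) := by
  rw [poe, log_div (prod_rpow_pos w hp v).ne' (poeNormalizer_pos w hp).ne',
    log_prod_rpow (fun i => hp i v)]

theorem sum_mul_KL_eq_KL_poe_sub_log [Nonempty V] (hp : ∀ i v, 0 < p i v)
    (hw : ∑ i, w i = 1) {q : V → ℝ} (hq : ∑ v, q v = 1) :
    ∑ i, w i * KL q (p i) = KL q (poe p w) - log (poeNormalizer p w) := by
  have cross_entropy : ∑ i, w i * ∑ v, q v * log (p i v) = ∑ v, q v * log (poe p w v) +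
      log (poeNormalizer p w) := by
    simp only [log_poe w hp, mul_sub, sum_sub_distrib, mul_sum, ← sum_mul, hq, one_mul]
    rw [sum_comm]
    simp only [mul_left_comm, sub_add_cancel]
  simp only [KL_eq_sum_mul_log_sub_sum_mul_log q fun v => (hp _ v).ne',
    KL_eq_sum_mul_log_sub_sum_mul_log q fun v => (poe_pos w hp v).ne', mul_sub, sum_sub_distrib,
    ← sum_mul, hw, one_mul, cross_entropy]
  ring

end ProductOfExperts

theorem weighted_KL_min_value
    {V : Type*} [Fintype V] [Nonempty V] {M : ℕ}
    (p : Fin M → V → ℝ) (w : Fin M → ℝ)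
    (hp_pos : ∀ i v, 0 < p i v)
    (hp_sum : ∀ i, ∑ v, p i v = 1)
    (hw_nonneg : ∀ i, 0 ≤ w i)
    (hw_sum : ∑ i, w i = 1) :
    IsLeast
      {x : ℝ | ∃ q : V → ℝ, (∀ v, 0 ≤ q v) ∧ (∑ v, q v = 1) ∧
        x = ∑ i, w i * KL q (p i)}
      (-Real.log (∑ v, ∏ i, (p i v) ^ (w i))) ∧
    0 ≤ -Real.log (∑ v, ∏ i, (p i v) ^ (w i)) := by
  change IsLeast _ (-log (poeNormalizer p w)) ∧ 0 ≤ -log (poeNormalizer p w)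
  have hr := poe_pos w hp_pos
  have hr_sum := sum_poe w hp_pos
  have value_at_poe : -log (poeNormalizer p w) = ∑ i, w i * KL (poe p w) (p i) := by
    rw [sum_mul_KL_eq_KL_poe_sub_log w hp_pos hw_sum hr_sum, KL_self, zero_sub]
  refine ⟨⟨⟨poe p w, fun v => (hr v).le, hr_sum, value_at_poe⟩, ?_⟩, ?_⟩
  · rintro _ ⟨q, hq, hq_sum, rfl⟩
    rw [sum_mul_KL_eq_KL_poe_sub_log w hp_pos hw_sum hq_sum]
    linarith [KL_nonneg hq hr (by rw [hq_sum, hr_sum])]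
  · rw [value_at_poe]
    exact sum_nonneg fun i _ => mul_nonneg (hw_nonneg i)
      (KL_nonneg (fun v => (hr v).le) (hp_pos i) (by rw [hp_sum, hr_sum]))
end
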